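/- The fixed point of the morphism 2 → 210, 1 → 20, 0 → 1 (starting from 2) is an infinite squarefree word over {0,1,2}. -/

import Mathlib

def μ : Fin 3 → List (Fin 3)
  | 0 => [1]
  | 1 => [2,0]
  | 2 => [2,1,0]

/-- `x` occurs as a factor (contiguous subword) of the infinite word `w`. -/
def FactorOf {α : Type*} (x : List α) (w : ℕ → α) : Prop :=
  ∃ i, x = (List.range x.length).map (fun j => w (i + j))

def t (n : ℕ) : Bool :=
  if h : n = 0 then false
  else ((n % 2 == 1) ^^ t (n / 2))
decreasing_by exact Nat.div_lt_self (Nat.pos_of_ne_zero h) one_lt_two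

lemma t_zero : t 0 = false := by simp [t]

lemma t_even (n : ℕ) : t (2 * n) = t n := by
  rcases Nat.eq_zero_or_pos n with h | h
  · subst h; norm_num
  · rw [t]
    have h2 : ¬ (2 * n = 0) := by omega
    have h3 : (2 * n) % 2 = 0 := by omega
    have h4 : (2 * n) / 2 = n := by omega
    simp [h2, h3, h4]

lemma t_odd (n : ℕ) : t (2 * n + 1) = !(t n) := by
  rw [t]
  have h2 : ¬ (2 * n + 1 = 0) := by omega
  have h3 : (2 * n + 1) % 2 = 1 := by omega
  have h4 : (2 * n + 1) / 2 = n := by omega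
  simp [h2, h3, h4]

lemma t_pair (k : ℕ) : t (2 * k) ≠ t (2 * k + 1) := by
  rw [t_even, t_odd]; cases t k <;> simp

lemma tnn (n : ℕ) (h1 : t n = t (n + 1)) (h2 : t (n + 1) = t (n + 2)) : False := by
  rcases Nat.even_or_odd n with ⟨c, hc⟩ | ⟨c, hc⟩
  · apply t_pair c
    have e1 : 2 * c = n := by omega
    have e2 : 2 * c + 1 = n + 1 := by omega
    rw [e1]; exact h1
  · apply t_pair (c + 1)
    have e1 : 2 * (c + 1) = n + 1 := by omega
    have e2 : 2 * (c + 1) + 1 = n + 2 := by omega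
    rw [e1]; exact h2

lemma no_overlap : ∀ q, 1 ≤ q → ∀ s, (∀ j, j ≤ q → t (s + j) = t (s + j + q)) → False := by
  intro q
  induction q using Nat.strong_induction_on with
  | _ q IH =>
    intro hq s H
    rcases Nat.even_or_odd q with ⟨r, hr⟩ | ⟨r, hr⟩
    · -- q even, q = r + r
      have hr1 : 1 ≤ r := by omega
      refine IH r (by omega) hr1 (s / 2) ?_
      intro j hj
      have h2j := H (2 * j) (by omega)
      rcases Nat.even_or_odd s with ⟨c, hc⟩ | ⟨c, hc⟩
      · have e1 : s + 2 * j = 2 * (c + j) := by omega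
        have e2 : s + 2 * j + q = 2 * (c + j + r) := by omega
        rw [e2, e1, t_even, t_even] at h2j
        have e3 : s / 2 = c := by omega
        rw [e3]
        exact h2j
      · have e1 : s + 2 * j = 2 * (c + j) + 1 := by omega
        have e2 : s + 2 * j + q = 2 * (c + j + r) + 1 := by omega
        rw [e2, e1, t_odd, t_odd] at h2j
        have e3 : s / 2 = c := by omega
        rw [e3]
        simpa using h2j
    · -- q odd, q = 2r+1
      rcases Nat.eq_zero_or_pos r with h0 | hrpos
      · -- q = 1
        have A := H 0 (by omega)
        have B := H 1 (by omega)
        have e2 : s + 0 + q = s + 1 := by omega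
        have e3 : s + 1 + q = s + 2 := by omega
        rw [e2, Nat.add_zero] at A
        rw [e3] at B
        exact tnn s A B
      · -- q = 2r+1, r ≥ 1
        have A := H 0 (by omega)
        have B := H 1 (by omega)
        have C := H 2 (by omega)
        have D := H 3 (by omega)
        rcases Nat.even_or_odd s with ⟨c, hc⟩ | ⟨c, hc⟩
        · -- s = 2c
          have e0 : s + 0 = 2 * c := by omega
          have e0' : s + 0 + q = 2 * (c + r) + 1 := by omega
          have e1 : s + 1 = 2 * c + 1 := by omega
          have e1' : s + 1 + q = 2 * (c + r + 1) := by omega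
          have e2 : s + 2 = 2 * (c + 1) := by omega
          have e2' : s + 2 + q = 2 * (c + r + 1) + 1 := by omega
          have e3 : s + 3 = 2 * (c + 1) + 1 := by omega
          have e3' : s + 3 + q = 2 * (c + r + 2) := by omega
          rw [e0', e0, t_even, t_odd] at A
          rw [e1', e1, t_odd, t_even] at B
          rw [e2', e2, t_even, t_odd] at C
          rw [e3', e3, t_odd, t_even] at D
          -- A : t c = !t (c+r), B : !t c = t (c+r+1), C : t (c+1) = !t (c+r+1), D : !t (c+1) = t (c+r+2)
          apply tnn (c + r)
          · cases h : t c <;> simp [h] at A B <;> simp [A, B]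
          · cases h : t (c + 1) <;> simp [h] at C D <;> simp [C, D]
        · -- s = 2c + 1
          have e0 : s + 0 = 2 * c + 1 := by omega
          have e0' : s + 0 + q = 2 * (c + r + 1) := by omega
          have e1 : s + 1 = 2 * (c + 1) := by omega
          have e1' : s + 1 + q = 2 * (c + r + 1) + 1 := by omega
          have e2 : s + 2 = 2 * (c + 1) + 1 := by omega
          have e2' : s + 2 + q = 2 * (c + r + 2) := by omega
          have e3 : s + 3 = 2 * (c + 2) := by omega
          have e3' : s + 3 + q = 2 * (c + r + 2) + 1 := by omega
          rw [e0', e0, t_odd, t_even] at A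
          rw [e1', e1, t_even, t_odd] at B
          rw [e2', e2, t_odd, t_even] at C
          rw [e3', e3, t_even, t_odd] at D
          -- A : !t c = t (c+r+1), B : t (c+1) = !t (c+r+1), C : !t (c+1) = t (c+r+2), D : t (c+2) = !t (c+r+2)
          apply tnn c
          · cases h : t (c + r + 1) <;> simp [h] at A B <;> simp [A, B]
          · cases h : t (c + r + 2) <;> simp [h] at C D <;> simp [C, D]


def g (a b : Bool) : Fin 3 :=
  if a then (if b then 1 else 0) else (if b then 2 else 1)

def wtm (n : ℕ) : Fin 3 := g (t n) (t (n + 1))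

def phi (n : ℕ) : ℕ := 2 * n + (if t n then 1 else 0)

lemma t_one : t 1 = true := by
  have := t_odd 0
  simpa [t_zero] using this

lemma step (N : ℕ) :
    (List.range (phi (N + 1))).map wtm = (List.range (phi N)).map wtm ++ μ (wtm N) := by
  have ha : t (2 * N) = t N := t_even N
  have hb : t (2 * N + 1) = !t N := t_odd N
  have hc : t (2 * N + 2) = t (N + 1) := by
    have e : 2 * N + 2 = 2 * (N + 1) := by ring
    rw [e, t_even]
  have hd : t (2 * N + 3) = !t (N + 1) := by
    have e : 2 * N + 3 = 2 * (N + 1) + 1 := by ring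
    rw [e, t_odd]
  cases hN : t N <;> cases hN1 : t (N + 1)
  · -- (false, false): w N = 1, μ = [2,0], phi N = 2N, phi (N+1) = 2N+2
    have pa : phi N = 2 * N := by simp [phi, hN]
    have pb : phi (N + 1) = phi N + 2 := by simp [phi, hN, hN1]; omega
    rw [pb, List.range_add, List.map_append, List.map_map]
    congr 1
    have : List.range 2 = [0, 1] := rfl
    rw [this]
    simp [wtm, g, pa, ha, hb, hc, hN, hN1, μ]
  · -- (false, true): w N = 2, μ = [2,1,0], phi (N+1) = 2N+3
    have pa : phi N = 2 * N := by simp [phi, hN]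
    have pb : phi (N + 1) = phi N + 3 := by simp [phi, hN, hN1]; omega
    rw [pb, List.range_add, List.map_append, List.map_map]
    congr 1
    have : List.range 3 = [0, 1, 2] := rfl
    rw [this]
    simp [wtm, g, pa, ha, hb, hc, hd, hN, hN1, μ]
  · -- (true, false): w N = 0, μ = [1], phi N = 2N+1, phi (N+1) = 2N+2
    have pa : phi N = 2 * N + 1 := by simp [phi, hN]
    have pb : phi (N + 1) = phi N + 1 := by simp [phi, hN, hN1]; omega
    rw [pb, List.range_add, List.map_append, List.map_map]
    congr 1
    have : List.range 1 = [0] := rfl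
    rw [this]
    simp [wtm, g, pa, hb, hc, hN, hN1, μ]
  · -- (true, true): w N = 1, μ = [2,0], phi N = 2N+1, phi (N+1) = 2N+3
    have pa : phi N = 2 * N + 1 := by simp [phi, hN]
    have pb : phi (N + 1) = phi N + 2 := by simp [phi, hN, hN1]; omega
    rw [pb, List.range_add, List.map_append, List.map_map]
    congr 1
    have : List.range 2 = [0, 1] := rfl
    rw [this]
    have e1 : 2 * N + 1 + 1 = 2 * N + 2 := by omega
    have e2 : 2 * N + 1 + 1 + 1 = 2 * N + 3 := by omega
    simp [wtm, g, pa, hb, hc, hd, hN, hN1, μ, e1, e2]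

lemma bind_append' (l l' : List (Fin 3)) : (l ++ l').flatMap μ = l.flatMap μ ++ l'.flatMap μ := by
  rw [List.flatMap_append]

lemma bind_singleton' {α : Type*} (f : α → Fin 3) (a : α) : (List.map f [a]).flatMap μ = μ (f a) := by
  show [f a].flatMap μ = μ (f a)
  simp

lemma bind_prefix (N : ℕ) :
    ((List.range N).map wtm).flatMap μ = (List.range (phi N)).map wtm := by
  induction N with
  | zero => simp [phi, t_zero]
  | succ N ih =>
    rw [List.range_succ, List.map_append, bind_append', ih, bind_singleton' wtm N, step]

lemma wtm_zero : wtm 0 = 2 := by simp [wtm, g, t_zero, t_one]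

def dd (q x : ℕ) : ℤ := (if t (x + q) then 1 else 0) - (if t x then 1 else 0)

lemma dstep (q x : ℕ) (h : wtm x = wtm (x + q)) : dd q (x + 1) = dd q x := by
  have e : x + 1 + q = x + q + 1 := by omega
  unfold wtm g at h
  unfold dd
  rw [e]
  cases h1 : t x <;> cases h2 : t (x + 1) <;> cases h3 : t (x + q) <;> cases h4 : t (x + q + 1) <;>
    simp [h1, h2, h3, h4] at h ⊢ <;> exact absurd h (by decide)

/-- The fixed point of μ starting from 2: an infinite word having every iterate
`μⁿ(2)` as a prefix, which is squarefree. -/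
theorem mu_fixed_point_squarefree :
    ∃ w : ℕ → Fin 3,
      (∀ n : ℕ,
        (fun v : List (Fin 3) => v.flatMap μ)^[n] [2] =
          (List.range ((fun v : List (Fin 3) => v.flatMap μ)^[n] [2]).length).map w) ∧
      (∀ y : List (Fin 3), y ≠ [] → ¬ FactorOf (y ++ y) w) := by
  refine ⟨wtm, ?_, ?_⟩
  · intro n
    induction n with
    | zero =>
      have h1 : List.range 1 = [0] := rfl
      show [2] = List.map wtm (List.range ([2] : List (Fin 3)).length)
      simp [h1, wtm_zero]
    | succ n ih =>
      simp only [Function.iterate_succ_apply']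
      rw [ih, bind_prefix]
      simp
  · rintro y hy ⟨i, hfac⟩
    set q := y.length with hqdef
    have hq : 1 ≤ q := List.length_pos_iff.mpr hy
    have hlen : (y ++ y).length = q + q := by simp [hqdef]
    have hg : ∀ j (hj : j < (y ++ y).length), (y ++ y)[j] = wtm (i + j) := by
      intro j hj
      have := List.getElem_of_eq hfac hj
      simpa using this
    have key : ∀ j, j < q → wtm (i + j) = wtm (i + j + q) := by
      intro j hj
      have h1 : (y ++ y)[j]'(by omega) = y[j]'hj := List.getElem_append_left _
      have h2 : (y ++ y)[q + j]'(by omega) = y[j]'hj := by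
        rw [List.getElem_append_right (by omega)]
        congr 1
        omega
      have g1 := hg j (by omega)
      have g2 := hg (q + j) (by omega)
      rw [h1] at g1
      rw [h2] at g2
      have e : i + (q + j) = i + j + q := by omega
      rw [e] at g2
      rw [← g2]
      exact g1.symm
    have const : ∀ j, j ≤ q → dd q (i + j) = dd q i := by
      intro j hj
      induction j with
      | zero => rfl
      | succ j ihj =>
        have e : i + (j + 1) = (i + j) + 1 := by omega
        rw [e, dstep q (i + j) (key j (by omega)), ihj (by omega)]
    have mem : dd q i = -1 ∨ dd q i = 0 ∨ dd q i = 1 := by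
      unfold dd
      cases t (i + q) <;> cases t i <;> simp
    rcases mem with h | h | h
    · -- t (i+j) = true, t (i+j+q) = false for all j ≤ q
      have v0 := const 0 (by omega)
      have vq := const q (by omega)
      rw [h] at v0 vq
      unfold dd at v0 vq
      have e : i + 0 = i := by omega
      rw [e] at v0
      -- from v0 : t (i+q) false ; from vq : t (i+q+q)... need t(i+q) true
      cases h1 : t (i + q) <;> rw [h1] at v0 vq <;>
        [skip; (cases h2 : t i <;> rw [h2] at v0 <;> omega)]
      cases h2 : t (i + q + q) <;> rw [h2] at vq <;> omega
    · -- overlap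
      refine no_overlap q hq i ?_
      intro j hj
      have := const j hj
      rw [h] at this
      unfold dd at this
      cases h1 : t (i + j + q) <;> cases h2 : t (i + j) <;> rw [h1, h2] at this <;> simp at this <;> rfl
    · have v0 := const 0 (by omega)
      have vq := const q (by omega)
      rw [h] at v0 vq
      unfold dd at v0 vq
      have e : i + 0 = i := by omega
      rw [e] at v0
      cases h1 : t (i + q) <;> rw [h1] at v0 vq <;>
        [(cases h2 : t i <;> rw [h2] at v0 <;> omega); skip]
      cases h2 : t (i + q + q) <;> rw [h2] at vq <;> omega
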